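/- arXiv:1903.01020 — 2 statements merged into one kernel-verified Lean document; each statement's English description precedes it below -/
import Mathlib

section
/- Let (X,σ) be an unbalanced connected magnetic graph. Define for each m in AE_σ(X) the quantity ‖m‖_{AE_σ} := inf { Σᵢ |aᵢ| : m = Σᵢ aᵢ m^σ_{uᵢvᵢ}, aᵢ ∈ ℂ, uᵢ ∼ vᵢ }. Then ‖·‖_{AE_σ} is a norm; in particular, ‖m‖_{AE_σ} = 0 implies m = 0. -/
/-!
Every representation of `m` by atoms bounds each value `|m x|` by twice its cost, since an atom
has entries of modulus at most `1 + |σ_{uv}| = 2`; so `‖m‖_{AE_σ} = 0` forces `m = 0`.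
Homogeneity and the triangle inequality come from scaling and concatenating representations;
the latter needs every function to be representable. Along a walk `w` from `u` to `v` the atoms
telescope to `δ_u - σ(w) δ_v`, so a closed walk at `u` with `σ(w) ≠ 1` yields `δ_u`, and
connectedness then yields every `δ_v`.
-/

namespace MagneticGraph

variable {V : Type*}

/-- `σ` is a signature on `G`: unimodular on edges and conjugate-symmetric. -/
def IsSignature (G : SimpleGraph V) (σ : V → V → ℂ) : Prop :=
  ∀ u v, G.Adj u v → ‖σ u v‖ = 1 ∧ σ v u = starRingEnd ℂ (σ u v)

/-- Product of the signature along (the darts of) a walk. -/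
def sigProd {G : SimpleGraph V} (σ : V → V → ℂ) {u v : V} (w : G.Walk u v) : ℂ :=
  (w.darts.map fun d => σ d.toProd.1 d.toProd.2).prod

/-- `(X,σ)` is unbalanced: some directed cycle has signature product `≠ 1`. -/
def Unbalanced (G : SimpleGraph V) (σ : V → V → ℂ) : Prop :=
  ∃ (u : V) (w : G.Walk u u), w.IsCycle ∧ sigProd σ w ≠ 1

/-- `(X,σ)` is balanced: every directed cycle has signature product `1`. -/
def Balanced (G : SimpleGraph V) (σ : V → V → ℂ) : Prop :=
  ∀ (u : V) (w : G.Walk u u), w.IsCycle → sigProd σ w = 1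

/-- The σ-Lipschitz (semi)norm `max_{u∼v} |f(u) - σ_{uv} f(v)|`. -/
noncomputable def lipNorm (G : SimpleGraph V) (σ : V → V → ℂ) (f : V → ℂ) : ℝ :=
  sSup {r : ℝ | ∃ u v, G.Adj u v ∧ r = ‖f u - σ u v * f v‖}

/-- The magnetic atom `m^σ_{uv} = δ_u - σ_{uv} δ_v`. -/
def atom [DecidableEq V] (σ : V → V → ℂ) (u v : V) : V → ℂ :=
  fun w => (if w = u then (1 : ℂ) else 0) - σ u v * (if w = v then (1 : ℂ) else 0)

/-- Membership in the magnetic Arens–Eells space: a finite linear combination of atoms. -/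
def InAE [DecidableEq V] (G : SimpleGraph V) (σ : V → V → ℂ) (m : V → ℂ) : Prop :=
  ∃ (n : ℕ) (a : Fin n → ℂ) (p q : Fin n → V),
    (∀ i, G.Adj (p i) (q i)) ∧ m = ∑ i, a i • atom σ (p i) (q i)

/-- The magnetic Arens–Eells norm: infimum of `Σ|aᵢ|` over representations by atoms. -/
noncomputable def aeNorm [DecidableEq V] (G : SimpleGraph V) (σ : V → V → ℂ) (m : V → ℂ) : ℝ :=
  sInf {s : ℝ | ∃ (n : ℕ) (a : Fin n → ℂ) (p q : Fin n → V),
    (∀ i, G.Adj (p i) (q i)) ∧ m = ∑ i, a i • atom σ (p i) (q i) ∧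
    s = ∑ i, ‖a i‖}

open SimpleGraph Pointwise

lemma sigProd_cons {G : SimpleGraph V} {σ : V → V → ℂ} {u x v : V} (h : G.Adj u x)
    (w : G.Walk x v) :
    sigProd σ (Walk.cons h w) = σ u x * sigProd σ w := by
  simp [sigProd]

section ArensEells

variable [DecidableEq V] {G : SimpleGraph V} {σ : V → V → ℂ}

variable (G σ) in
def aeCosts (m : V → ℂ) : Set ℝ :=
  {s : ℝ | ∃ (n : ℕ) (a : Fin n → ℂ) (p q : Fin n → V),
    (∀ i, G.Adj (p i) (q i)) ∧ m = ∑ i, a i • atom σ (p i) (q i) ∧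
    s = ∑ i, ‖a i‖}

lemma aeNorm_eq_sInf (m : V → ℂ) : aeNorm G σ m = sInf (aeCosts G σ m) := rfl

lemma inAE_iff_aeCosts_nonempty {m : V → ℂ} : InAE G σ m ↔ (aeCosts G σ m).Nonempty :=
  ⟨fun ⟨n, a, p, q, hpq, hm⟩ => ⟨_, n, a, p, q, hpq, hm, rfl⟩,
    fun ⟨_, n, a, p, q, hpq, hm, _⟩ => ⟨n, a, p, q, hpq, hm⟩⟩

lemma nonneg_of_mem_aeCosts {m : V → ℂ} {s : ℝ} (hs : s ∈ aeCosts G σ m) : 0 ≤ s := by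
  obtain ⟨n, a, p, q, -, -, rfl⟩ := hs
  exact Finset.sum_nonneg fun i _ => norm_nonneg _

lemma bddBelow_aeCosts (m : V → ℂ) : BddBelow (aeCosts G σ m) :=
  ⟨0, fun _ => nonneg_of_mem_aeCosts⟩

lemma zero_mem_aeCosts : (0 : ℝ) ∈ aeCosts G σ 0 :=
  ⟨0, Fin.elim0, Fin.elim0, Fin.elim0, fun i => i.elim0, by simp, by simp⟩

lemma add_mem_aeCosts {m m' : V → ℂ} {s t : ℝ} (hs : s ∈ aeCosts G σ m)
    (ht : t ∈ aeCosts G σ m') : s + t ∈ aeCosts G σ (m + m') := by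
  obtain ⟨n, a, p, q, hpq, rfl, rfl⟩ := hs
  obtain ⟨n', a', p', q', hpq', rfl, rfl⟩ := ht
  refine ⟨n + n', Fin.append a a', Fin.append p p', Fin.append q q', ?_, ?_, ?_⟩
  · exact Fin.addCases (by simpa using hpq) (by simpa using hpq')
  · simp [Fin.sum_univ_add]
  · simp [Fin.sum_univ_add]

lemma mul_mem_aeCosts_smul {m : V → ℂ} {s : ℝ} (c : ℂ) (hs : s ∈ aeCosts G σ m) :
    ‖c‖ * s ∈ aeCosts G σ (c • m) := by
  obtain ⟨n, a, p, q, hpq, rfl, rfl⟩ := hs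
  refine ⟨n, fun i => c * a i, p, q, hpq, ?_, ?_⟩
  · simp [Finset.smul_sum, smul_smul]
  · simp [Finset.mul_sum]

lemma aeCosts_smul {c : ℂ} (hc : c ≠ 0) (m : V → ℂ) :
    aeCosts G σ (c • m) = ‖c‖ • aeCosts G σ m := by
  ext s
  refine ⟨fun hs => ⟨‖c⁻¹‖ * s, ?_, ?_⟩, fun ⟨t, ht, hts⟩ => hts ▸ mul_mem_aeCosts_smul c ht⟩
  · simpa [smul_smul, hc] using mul_mem_aeCosts_smul c⁻¹ hs
  · simp [hc]

lemma aeNorm_zero : aeNorm G σ 0 = 0 :=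
  le_antisymm (csInf_le (bddBelow_aeCosts _) zero_mem_aeCosts)
    (le_csInf ⟨0, zero_mem_aeCosts⟩ fun _ => nonneg_of_mem_aeCosts)

lemma aeNorm_smul (c : ℂ) (m : V → ℂ) : aeNorm G σ (c • m) = ‖c‖ * aeNorm G σ m := by
  rcases eq_or_ne c 0 with rfl | hc
  · simp [aeNorm_zero]
  · rw [aeNorm_eq_sInf, aeNorm_eq_sInf, aeCosts_smul hc, Real.sInf_smul_of_nonneg (norm_nonneg c),
      smul_eq_mul]

lemma aeNorm_add_le {m m' : V → ℂ} (hm : InAE G σ m) (hm' : InAE G σ m') :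
    aeNorm G σ (m + m') ≤ aeNorm G σ m + aeNorm G σ m' := by
  refine le_of_forall_pos_le_add fun ε hε => ?_
  obtain ⟨s, hs, hs_lt⟩ :=
    Real.lt_sInf_add_pos (inAE_iff_aeCosts_nonempty.1 hm) (half_pos hε)
  obtain ⟨t, ht, ht_lt⟩ :=
    Real.lt_sInf_add_pos (inAE_iff_aeCosts_nonempty.1 hm') (half_pos hε)
  calc aeNorm G σ (m + m') ≤ s + t := csInf_le (bddBelow_aeCosts _) (add_mem_aeCosts hs ht)
    _ ≤ aeNorm G σ m + aeNorm G σ m' + ε := by rw [aeNorm_eq_sInf, aeNorm_eq_sInf]; linarith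

lemma atom_eq (u v : V) : atom σ u v = Pi.single u 1 - σ u v • Pi.single v 1 := by
  ext w
  simp [atom, Pi.single_apply]

lemma norm_atom_apply_le {u v : V} (huv : ‖σ u v‖ ≤ 1) (x : V) : ‖atom σ u v x‖ ≤ 2 := by
  have hsingle : ∀ y : V, ‖(Pi.single y 1 : V → ℂ) x‖ ≤ 1 := fun y => by
    rw [Pi.single_apply]; split_ifs <;> simp
  calc ‖atom σ u v x‖
      ≤ ‖(Pi.single u 1 : V → ℂ) x‖ + ‖σ u v‖ * ‖(Pi.single v 1 : V → ℂ) x‖ := by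
        rw [atom_eq, Pi.sub_apply, Pi.smul_apply, smul_eq_mul, ← norm_mul]
        exact norm_sub_le _ _
    _ ≤ 1 + 1 * 1 := by gcongr <;> exact hsingle _
    _ = 2 := by norm_num

lemma norm_apply_le_of_mem_aeCosts (hσ : ∀ u v, G.Adj u v → ‖σ u v‖ ≤ 1) {m : V → ℂ} {s : ℝ}
    (hs : s ∈ aeCosts G σ m) (x : V) : ‖m x‖ ≤ 2 * s := by
  obtain ⟨n, a, p, q, hpq, rfl, rfl⟩ := hs
  calc ‖(∑ i, a i • atom σ (p i) (q i)) x‖ = ‖∑ i, a i * atom σ (p i) (q i) x‖ := by simp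
    _ ≤ ∑ i, ‖a i‖ * ‖atom σ (p i) (q i) x‖ :=
        (norm_sum_le _ _).trans_eq (by simp only [norm_mul])
    _ ≤ ∑ i, ‖a i‖ * 2 := by
        gcongr with i; exact norm_atom_apply_le (hσ _ _ (hpq i)) x
    _ = 2 * ∑ i, ‖a i‖ := by rw [← Finset.sum_mul, mul_comm]

lemma norm_apply_le_two_mul_aeNorm (hσ : ∀ u v, G.Adj u v → ‖σ u v‖ ≤ 1) {m : V → ℂ}
    (hm : InAE G σ m) (x : V) : ‖m x‖ ≤ 2 * aeNorm G σ m := by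
  have : ‖m x‖ / 2 ≤ aeNorm G σ m :=
    le_csInf (inAE_iff_aeCosts_nonempty.1 hm) fun s hs => by
      linarith [norm_apply_le_of_mem_aeCosts hσ hs x]
  linarith

variable (G σ) in
def aeSubmodule : Submodule ℂ (V → ℂ) where
  carrier := {m | InAE G σ m}
  zero_mem' := inAE_iff_aeCosts_nonempty.2 ⟨0, zero_mem_aeCosts⟩
  add_mem' {m m'} hm hm' := by
    obtain ⟨s, hs⟩ := inAE_iff_aeCosts_nonempty.1 hm
    obtain ⟨t, ht⟩ := inAE_iff_aeCosts_nonempty.1 hm'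
    exact inAE_iff_aeCosts_nonempty.2 ⟨_, add_mem_aeCosts hs ht⟩
  smul_mem' c m hm := by
    obtain ⟨s, hs⟩ := inAE_iff_aeCosts_nonempty.1 hm
    exact inAE_iff_aeCosts_nonempty.2 ⟨_, mul_mem_aeCosts_smul c hs⟩

lemma mem_aeSubmodule {m : V → ℂ} : m ∈ aeSubmodule G σ ↔ InAE G σ m := Iff.rfl

lemma atom_mem_aeSubmodule {u v : V} (huv : G.Adj u v) : atom σ u v ∈ aeSubmodule G σ :=
  ⟨1, fun _ => 1, fun _ => u, fun _ => v, fun _ => huv, by simp⟩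

lemma single_sub_sigProd_smul_single_mem {u v : V} (w : G.Walk u v) :
    Pi.single u 1 - sigProd σ w • Pi.single v 1 ∈ aeSubmodule G σ := by
  induction w with
  | nil => simp [sigProd]
  | @cons u x v h w ih =>
    have htelescope : Pi.single u 1 - sigProd σ (Walk.cons h w) • Pi.single v 1 =
        atom σ u x + σ u x • (Pi.single x 1 - sigProd σ w • Pi.single v 1) := by
      rw [atom_eq, sigProd_cons]
      module
    rw [htelescope]
    exact add_mem (atom_mem_aeSubmodule h) (Submodule.smul_mem _ _ ih)

lemma single_mem_aeSubmodule (hconn : G.Connected) (hunb : Unbalanced G σ) (v : V) :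
    Pi.single v 1 ∈ aeSubmodule G σ := by
  obtain ⟨u, c, -, hc⟩ := hunb
  have hu : Pi.single u 1 ∈ aeSubmodule G σ := by
    rw [← Submodule.smul_mem_iff _ (sub_ne_zero.2 hc.symm), sub_smul, one_smul]
    exact single_sub_sigProd_smul_single_mem c
  obtain ⟨w⟩ := hconn v u
  simpa using add_mem (single_sub_sigProd_smul_single_mem (σ := σ) w)
    (Submodule.smul_mem _ (sigProd σ w) hu)

lemma aeSubmodule_eq_top [Fintype V] (hconn : G.Connected) (hunb : Unbalanced G σ) :
    aeSubmodule G σ = ⊤ := by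
  rw [eq_top_iff, ← (Pi.basisFun ℂ V).span_eq, Submodule.span_le]
  rintro _ ⟨v, rfl⟩
  simpa using single_mem_aeSubmodule hconn hunb v

end ArensEells

/-- for an unbalanced connected magnetic graph, `‖·‖_{AE_σ}` is a norm;
in particular it is definite. -/
theorem stmt4 {V : Type*} [Fintype V] [DecidableEq V] (G : SimpleGraph V) (σ : V → V → ℂ)
    (hσ : IsSignature G σ) (hconn : G.Connected) (hunb : Unbalanced G σ) :
    (∀ (a : ℂ) (m : V → ℂ), aeNorm G σ (a • m) = ‖a‖ * aeNorm G σ m) ∧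
    (∀ m m' : V → ℂ, aeNorm G σ (m + m') ≤ aeNorm G σ m + aeNorm G σ m') ∧
    (∀ m : V → ℂ, aeNorm G σ m = 0 → m = 0) := by
  have hAE : ∀ m, InAE G σ m := fun m =>
    mem_aeSubmodule.1 (aeSubmodule_eq_top hconn hunb ▸ Submodule.mem_top)
  refine ⟨aeNorm_smul, fun m m' => aeNorm_add_le (hAE m) (hAE m'), fun m hm => ?_⟩
  funext x
  simpa [hm] using norm_apply_le_two_mul_aeNorm (fun u v h => (hσ u v h).1.le) (hAE m) x

end MagneticGraph
end

section
/- Let (X,σ) be an unbalanced magnetic graph and f in the unit ball of Lip_σ(X). If the magnetic graph H_f of σ-satisfied edges of f (edges {u,v} of X with |f(u) − σ_{uv}f(v)| = 1, with signature restricted from σ) has some balanced connected component, then f is not an extreme point of the unit ball of Lip_σ(X). -/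
/-!
Fix a vertex `u` whose component in `H_f` is balanced. Signature products of walks from a vertex
of that component to `u` do not depend on the walk: bypassing a repeated vertex removes a cycle
or an edge traversed back and forth, both of product `1`. These products, extended by `0` off the
component, form a gauge `h` with `‖h u‖ = 1`, `‖h‖ ≤ 1` and `h x = σ x y * h y` on every edge of
`H_f`. Adding a multiple of `h` leaves the satisfied edges untouched, while the finitely many
unsatisfied ones have a uniform slack `δ > 0`; hence `f ± (δ / 2) h` lies in the unit ball.
-/

namespace MagneticGraph

variable {V : Type*}

/-- `f` is an extreme point of the unit ball of `Lip_σ(X)`. -/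
def ExtremePt (G : SimpleGraph V) (σ : V → V → ℂ) (f : V → ℂ) : Prop :=
  lipNorm G σ f ≤ 1 ∧
  ∀ g : V → ℂ, (∀ t : ℝ, t ∈ Set.Icc (-1 : ℝ) 1 → lipNorm G σ (f + t • g) ≤ 1) → g = 0

/-- The graph `H_f` of σ-satisfied edges of `f`. -/
def satGraph (G : SimpleGraph V) (σ : V → V → ℂ) (f : V → ℂ) : SimpleGraph V :=
  SimpleGraph.fromRel fun u v => G.Adj u v ∧ ‖f u - σ u v * f v‖ = 1

/-- Every connected component of `H` is unbalanced: each vertex can reach an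
unbalanced cycle within `H`. -/
def AllComponentsUnbalanced (H : SimpleGraph V) (σ : V → V → ℂ) : Prop :=
  ∀ u : V, ∃ (x : V) (w : H.Walk x x), H.Reachable u x ∧ w.IsCycle ∧ sigProd σ w ≠ 1

open SimpleGraph

def ComponentBalanced (H : SimpleGraph V) (σ : V → V → ℂ) (u : V) : Prop :=
  ∀ (x : V) (w : H.Walk x x), H.Reachable u x → w.IsCycle → sigProd σ w = 1

lemma IsSignature.mono {G H : SimpleGraph V} {σ : V → V → ℂ} (hσ : IsSignature G σ)
    (hHG : H ≤ G) : IsSignature H σ :=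
  fun u v huv => hσ u v (hHG huv)

lemma IsSignature.mul_swap_eq_one {G : SimpleGraph V} {σ : V → V → ℂ} (hσ : IsSignature G σ)
    {x y : V} (hxy : G.Adj x y) : σ x y * σ y x = 1 := by
  obtain ⟨hnorm, hswap⟩ := hσ x y hxy
  rw [hswap, Complex.mul_conj, Complex.normSq_eq_norm_sq, hnorm]
  norm_num

section sigProd

variable {G : SimpleGraph V} {σ : V → V → ℂ}

@[simp]
lemma sigProd_nil (x : V) : sigProd σ (Walk.nil : G.Walk x x) = 1 := rfl

@[simp]
lemma sigProd_cons_s7 {x y z : V} (e : G.Adj x y) (p : G.Walk y z) :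
    sigProd σ (Walk.cons e p) = σ x y * sigProd σ p := by
  simp [sigProd]

lemma sigProd_append {x y z : V} (p : G.Walk x y) (q : G.Walk y z) :
    sigProd σ (p.append q) = sigProd σ p * sigProd σ q := by
  simp [sigProd, Walk.darts_append]

lemma norm_sigProd (hσ : IsSignature G σ) {x y : V} (w : G.Walk x y) : ‖sigProd σ w‖ = 1 := by
  induction w with
  | nil => simp
  | cons e p ih => rw [sigProd_cons_s7, norm_mul, ih, mul_one, (hσ _ _ e).1]

lemma sigProd_reverse (hσ : IsSignature G σ) {x y : V} (w : G.Walk x y) :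
    sigProd σ w.reverse = (sigProd σ w)⁻¹ := by
  induction w with
  | nil => simp
  | cons e p ih =>
    rw [Walk.reverse_cons, sigProd_append, ih, sigProd_cons_s7, sigProd_cons_s7, sigProd_nil, mul_one,
      mul_inv, eq_inv_of_mul_eq_one_right (hσ.mul_swap_eq_one e), mul_comm]

end sigProd

section Balanced

variable {H : SimpleGraph V} {σ : V → V → ℂ} {u : V}

lemma sigProd_cons_eq_one_of_isPath (hσ : IsSignature H σ) (hbal : ComponentBalanced H σ u)
    {x y : V} (hx : H.Reachable u x) (e : H.Adj x y) (p : H.Walk y x) (hp : p.IsPath) :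
    sigProd σ (Walk.cons e p) = 1 := by
  cases p with
  | nil => exact absurd rfl e.ne
  | @cons _ z _ e' q =>
    by_cases hzx : z = x
    · subst hzx
      obtain rfl := (Walk.isPath_iff_nil.mp hp.of_cons).eq_nil
      simp [hσ.mul_swap_eq_one e]
    · refine hbal x _ hx ((Walk.cons_isCycle_iff _ e).mpr ⟨hp, ?_⟩)
      rw [Walk.edges_cons, List.mem_cons, not_or, Sym2.eq_swap]
      refine ⟨fun h => hzx (Sym2.congr_right.mp h).symm, fun h => ?_⟩
      exact ((Walk.cons_isPath_iff _ _).mp hp).2 (q.fst_mem_support_of_mem_edges h)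

lemma sigProd_bypass [DecidableEq V] (hσ : IsSignature H σ) (hbal : ComponentBalanced H σ u)
    {x y : V} (w : H.Walk x y) (hx : H.Reachable u x) : sigProd σ w.bypass = sigProd σ w := by
  induction w with
  | nil => rfl
  | @cons x y z e p ih =>
    have hp := ih (hx.trans e.reachable)
    simp only [Walk.bypass]
    split_ifs with hs
    · have hloop := sigProd_cons_eq_one_of_isPath hσ hbal hx e _
        ((Walk.bypass_isPath p).takeUntil hs)
      conv_rhs => rw [sigProd_cons_s7, ← hp, ← p.bypass.take_spec hs, sigProd_append, ← mul_assoc,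
        ← sigProd_cons_s7 e, hloop, one_mul]
    · rw [sigProd_cons_s7, sigProd_cons_s7, hp]

lemma sigProd_eq_one_of_reachable (hσ : IsSignature H σ) (hbal : ComponentBalanced H σ u)
    {x : V} (w : H.Walk x x) (hx : H.Reachable u x) : sigProd σ w = 1 := by
  classical
  rw [← sigProd_bypass hσ hbal w hx, (Walk.isPath_iff_nil.mp (Walk.bypass_isPath w)).eq_nil,
    sigProd_nil]

lemma sigProd_eq_of_reachable (hσ : IsSignature H σ) (hbal : ComponentBalanced H σ u)
    {x y : V} (w₁ w₂ : H.Walk x y) (hx : H.Reachable u x) : sigProd σ w₁ = sigProd σ w₂ := by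
  have hloop := sigProd_eq_one_of_reachable hσ hbal (w₁.append w₂.reverse) hx
  rw [sigProd_append, sigProd_reverse hσ, mul_inv_eq_one₀] at hloop
  · exact hloop
  · exact norm_ne_zero_iff.mp (by rw [norm_sigProd hσ]; exact one_ne_zero)

lemma exists_gauge_of_componentBalanced (hσ : IsSignature H σ)
    (hbal : ComponentBalanced H σ u) :
    ∃ h : V → ℂ, ‖h u‖ = 1 ∧ (∀ v, ‖h v‖ ≤ 1) ∧ ∀ x y, H.Adj x y → h x = σ x y * h y := by
  classical
  refine ⟨fun v => if hv : H.Reachable v u then sigProd σ hv.some else 0, ?_, fun v => ?_,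
    fun x y e => ?_⟩
  · simp only [Reachable.rfl, dite_true, norm_sigProd hσ]
  · by_cases hv : H.Reachable v u <;> simp [hv, norm_sigProd hσ]
  · by_cases hx : H.Reachable x u
    · have hy : H.Reachable y u := e.symm.reachable.trans hx
      simp only [hx, hy, dite_true]
      rw [← sigProd_cons_s7 e, sigProd_eq_of_reachable hσ hbal _ _ hx.symm]
    · have hy : ¬ H.Reachable y u := fun hy => hx (e.reachable.trans hy)
      simp [hx, hy]

end Balanced

lemma satGraph_le (G : SimpleGraph V) (σ : V → V → ℂ) (f : V → ℂ) : satGraph G σ f ≤ G := by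
  intro x y hxy
  rw [satGraph, fromRel_adj] at hxy
  rcases hxy with ⟨-, h | h⟩
  exacts [h.1, h.1.symm]

section Lipschitz

variable {G : SimpleGraph V} {σ : V → V → ℂ} {f : V → ℂ}

lemma satGraph_adj_of_adj {x y : V} (hxy : G.Adj x y) (hsat : ‖f x - σ x y * f y‖ = 1) :
    (satGraph G σ f).Adj x y :=
  (fromRel_adj _ _ _).mpr ⟨hxy.ne, Or.inl ⟨hxy, hsat⟩⟩

lemma lipNorm_le_iff [Finite V] {r : ℝ} (hr : 0 ≤ r) :
    lipNorm G σ f ≤ r ↔ ∀ x y, G.Adj x y → ‖f x - σ x y * f y‖ ≤ r := by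
  have hbdd : BddAbove {r : ℝ | ∃ x y, G.Adj x y ∧ r = ‖f x - σ x y * f y‖} :=
    ((Set.finite_range fun p : V × V => ‖f p.1 - σ p.1 p.2 * f p.2‖).subset
      (by rintro _ ⟨x, y, -, rfl⟩; exact ⟨(x, y), rfl⟩)).bddAbove
  refine ⟨fun h x y hxy => (le_csSup hbdd ⟨x, y, hxy, rfl⟩).trans h, fun h => ?_⟩
  exact Real.sSup_le (by rintro _ ⟨x, y, hxy, rfl⟩; exact h x y hxy) hr

open Filter Topology in
lemma exists_pos_add_le_of_lt {ι : Type*} [Finite ι] (a : ι → ℝ) (c : ℝ) :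
    ∃ δ > 0, ∀ i, a i < c → a i + δ ≤ c := by
  have hev : ∀ i, ∀ᶠ δ in 𝓝[>] (0 : ℝ), a i < c → a i + δ ≤ c := by
    intro i
    by_cases hi : a i < c
    · filter_upwards [nhdsWithin_le_nhds (Iic_mem_nhds (sub_pos.mpr hi))] with δ hδ _
      linarith [Set.mem_Iic.mp hδ]
    · exact Filter.Eventually.of_forall fun _ h => absurd h hi
  obtain ⟨δ, hδ, hpos⟩ := ((Filter.eventually_all.mpr hev).and self_mem_nhdsWithin).exists
  exact ⟨δ, hpos, hδ⟩

lemma not_extremePt_of_satGraph_adj [Finite V] (hσ : IsSignature G σ) (hf : lipNorm G σ f ≤ 1)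
    {h : V → ℂ} (hh : ∀ v, ‖h v‖ ≤ 1) (hne : h ≠ 0)
    (hsat : ∀ x y, (satGraph G σ f).Adj x y → h x = σ x y * h y) : ¬ ExtremePt G σ f := by
  rintro ⟨-, hext⟩
  have hedge := (lipNorm_le_iff zero_le_one).mp hf
  obtain ⟨δ, hδ, hgap⟩ :=
    exists_pos_add_le_of_lt (fun p : V × V => ‖f p.1 - σ p.1 p.2 * f p.2‖) 1
  refine hne ((smul_eq_zero.mp (hext ((δ / 2) • h) fun t ht => ?_)).resolve_left (by positivity))
  rw [lipNorm_le_iff zero_le_one]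
  intro x y hxy
  have hexpand : (f + t • (δ / 2) • h) x - σ x y * (f + t • (δ / 2) • h) y =
      (f x - σ x y * f y) + ((t * (δ / 2) : ℝ) : ℂ) * (h x - σ x y * h y) := by
    simp only [Pi.add_apply, Pi.smul_apply, Complex.real_smul]
    push_cast
    ring
  rw [hexpand]
  rcases (hedge x y hxy).lt_or_eq with hlt | hsat1
  · have hdiff : ‖h x - σ x y * h y‖ ≤ 2 := by
      calc ‖h x - σ x y * h y‖ ≤ ‖h x‖ + ‖σ x y‖ * ‖h y‖ := by
            rw [← norm_mul]; exact norm_sub_le _ _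
        _ ≤ 1 + 1 * 1 := by rw [(hσ x y hxy).1]; gcongr <;> exact hh _
        _ = 2 := by norm_num
    have ht : |t| ≤ 1 := abs_le.mpr ht
    calc _ ≤ ‖f x - σ x y * f y‖ + |t| * (δ / 2) * ‖h x - σ x y * h y‖ := by
          refine (norm_add_le _ _).trans_eq ?_
          rw [norm_mul, Complex.norm_real, Real.norm_eq_abs, abs_mul, abs_of_pos (half_pos hδ)]
      _ ≤ ‖f x - σ x y * f y‖ + 1 * (δ / 2) * 2 := by gcongr
      _ ≤ 1 := by linarith [hgap (x, y) hlt]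
  · rw [hsat x y (satGraph_adj_of_adj hxy hsat1), sub_self, mul_zero, add_zero, hsat1]

end Lipschitz

theorem stmt7_general {V : Type*} [Fintype V] (G : SimpleGraph V) (σ : V → V → ℂ)
    (hσ : IsSignature G σ) (f : V → ℂ) (hf : lipNorm G σ f ≤ 1)
    (hH : ∃ u : V, ∀ (x : V) (w : (satGraph G σ f).Walk x x),
      (satGraph G σ f).Reachable u x → w.IsCycle → sigProd σ w = 1) :
    ¬ ExtremePt G σ f := by
  obtain ⟨u, hbal⟩ := hH
  obtain ⟨h, hu, hh, hharm⟩ :=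
    exists_gauge_of_componentBalanced (hσ.mono (satGraph_le G σ f)) (u := u) hbal
  exact not_extremePt_of_satGraph_adj hσ hf hh (fun h0 => by simp [h0] at hu) hharm

/-- if the satisfied graph `H_f` has some balanced connected component,
then `f` is not an extreme point of the unit ball of `Lip_σ(X)`. -/
theorem stmt7 {V : Type*} [Fintype V] (G : SimpleGraph V) (σ : V → V → ℂ)
    (hσ : IsSignature G σ) (hunb : Unbalanced G σ) (f : V → ℂ) (hf : lipNorm G σ f ≤ 1)
    (hH : ∃ u : V, ∀ (x : V) (w : (satGraph G σ f).Walk x x),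
      (satGraph G σ f).Reachable u x → w.IsCycle → sigProd σ w = 1) :
    ¬ ExtremePt G σ f :=
  stmt7_general G σ hσ f hf hH

end MagneticGraph
end
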